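/- arXiv:2007.09736 — 2 statements merged into one kernel-verified Lean document; each statement's English description precedes it below -/
import Mathlib

section
/- There exists a 1-factorization (F₁, F₂, F₃, F₄) of the 4-cube graph Q₄ that is rainbow on every 4-cycle, together with a 2-factor of Q₄ consisting of two vertex-disjoint 8-cycles, such that traversing each of the two 8-cycles the successive edges lie in the 1-factors in the cyclic order (1,2,3,4,1,2,3,4). -/
/-- The 4-cube graph on vertex set `Fin 4 → ZMod 2`: two vertices are adjacent
iff they differ in exactly one coordinate. -/
def Q4 : SimpleGraph (Fin 4 → ZMod 2) where
  Adj x y := (Finset.univ.filter fun i => x i ≠ y i).card = 1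
  symm := by
    constructor
    intro x y h
    simpa [ne_comm] using h
  loopless := by constructor; intro x; simp

variable {V : Type*}

/-- `M` is (the edge set of) a perfect matching of `G`. -/
def IsPM (G : SimpleGraph V) (M : Set (Sym2 V)) : Prop :=
  M ⊆ G.edgeSet ∧ ∀ v : V, ∃! e, e ∈ M ∧ v ∈ e

/-- `F` is a 1-factorization of `G` into four perfect matchings:
each `F i` is a perfect matching and every edge of `G` lies in exactly one `F i`. -/
def IsOneFactorization (G : SimpleGraph V) (F : Fin 4 → Set (Sym2 V)) : Prop :=
  (∀ i, IsPM G (F i)) ∧ ∀ e ∈ G.edgeSet, ∃! i, e ∈ F i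

/-- `a, b, c, d` are the successive vertices of a 4-cycle of `G`. -/
def IsC4 (G : SimpleGraph V) (a b c d : V) : Prop :=
  a ≠ b ∧ a ≠ c ∧ a ≠ d ∧ b ≠ c ∧ b ≠ d ∧ c ≠ d ∧
  G.Adj a b ∧ G.Adj b c ∧ G.Adj c d ∧ G.Adj d a

/-- The color (1-factor index) at position `k` of the cyclic pattern `(1,2,3,4,1,2,3,4)`
along an 8-cycle indexed by `ZMod 8`. -/
def cyc8 (k : ZMod 8) : Fin 4 := ⟨k.val % 4, Nat.mod_lt _ (by norm_num)⟩

/-!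
Label the four directions, and the four colours, by the elements `0, 1, ω, ω + 1` of `𝔽₄`,
viewed as a 2-dimensional vector space over `𝔽₂`. The edge `{x, x + eᵢ}` with `x` of even
weight gets the colour `ω i + ∑_{x_k = 1} k`. Seen from either endpoint `x` this is the affine
map `i ↦ (ω + |x|) i + ∑_{x_k = 1} k`, where `|x|` is the weight of `x` mod 2; it is bijective
because `ω` and `ω + 1` are nonzero, so every colour class is a perfect matching. Around the
4-cycle spanned by directions `i ≠ j` the four colours differ pairwise by `i + j`, `ω (i + j)`
or `(ω + 1) (i + j)`, all nonzero, so every 4-cycle is rainbow. The two 8-cycles are then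
exhibited explicitly.
-/

open Function

section Hamming
variable {ι : Type*} [DecidableEq ι]

theorem ZMod.eq_add_one_of_ne {a b : ZMod 2} (h : a ≠ b) : b = a + 1 := by
  revert a b; decide

theorem hammingDist_eq_one_iff_exists_add_single [Fintype ι] {x y : ι → ZMod 2} :
    hammingDist x y = 1 ↔ ∃ i, y = x + Pi.single i 1 := by
  rw [hammingDist, Finset.card_eq_one]
  refine exists_congr fun i => ⟨fun h => funext fun j => ?_, ?_⟩
  · have hj := Finset.ext_iff.1 h j
    simp only [Finset.mem_filter, Finset.mem_univ, true_and, Finset.mem_singleton] at hj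
    by_cases hji : j = i
    · subst hji; simpa using ZMod.eq_add_one_of_ne (hj.2 rfl)
    · simpa [hji] using (not_not.1 (mt hj.1 hji)).symm
  · rintro rfl
    ext j
    by_cases hji : j = i <;> simp [hji]

theorem Pi.single_eq_single_iff {M : Type*} [Zero M] {b : M} (hb : b ≠ 0) {i j : ι} :
    (Pi.single i b : ι → M) = Pi.single j b ↔ i = j := by
  refine ⟨fun h => by_contra fun hij => hb ?_, fun h => h ▸ rfl⟩
  simpa [hij] using congrFun h i

theorem eq_and_eq_of_single_add_single_add_single_add_single_eq_zero {i j k l : ι}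
    (hij : i ≠ j) (hjk : j ≠ k)
    (h : (Pi.single i 1 + Pi.single j 1 + Pi.single k 1 + Pi.single l 1 : ι → ZMod 2) = 0) :
    k = i ∧ l = j := by
  have hj := congrFun h j
  have hlj : l = j := by
    by_contra hlj
    simp [hij, hjk.symm, hlj] at hj
  subst hlj
  have hi := congrFun h i
  refine ⟨by_contra fun hki => ?_, rfl⟩
  simp [hij.symm, hki] at hi

end Hamming

section Colouring
variable {ι C : Type*} [Fintype ι] [AddCommGroup C] [Module (ZMod 2) C]
  (ρ : C →ₗ[ZMod 2] C) (ℓ : ι → C)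

def labelSum (x : ι → ZMod 2) : C := ∑ k, x k • ℓ k

def edgeColor (x : ι → ZMod 2) (i : ι) : C := ρ (ℓ i) + (∑ k, x k) • ℓ i + labelSum ℓ x

variable {ρ ℓ} in
theorem edgeColor_injective (hρ : ∀ (t : ZMod 2) (z : C), ρ z = t • z → z = 0)
    (hℓ : Injective ℓ) (x : ι → ZMod 2) : Injective (edgeColor ρ ℓ x) := by
  intro i j h
  refine hℓ (sub_eq_zero.1 (hρ (-∑ k, x k) _ ?_))
  simp only [edgeColor] at h
  rw [map_sub]
  linear_combination (norm := module) h

variable [DecidableEq ι]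

theorem sum_add_single (x : ι → ZMod 2) (i : ι) :
    ∑ k, (x + Pi.single i 1 : ι → ZMod 2) k = ∑ k, x k + 1 := by
  simp [Finset.sum_add_distrib]

theorem labelSum_add_single (x : ι → ZMod 2) (i : ι) :
    labelSum ℓ (x + Pi.single i 1) = labelSum ℓ x + ℓ i := by
  simp [labelSum, add_smul, Finset.sum_add_distrib, Pi.single_apply]

theorem edgeColor_add_single (x : ι → ZMod 2) (i : ι) :
    edgeColor ρ ℓ (x + Pi.single i 1) i = edgeColor ρ ℓ x i := by
  simp only [edgeColor, labelSum_add_single, sum_add_single, add_smul, one_smul]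
  linear_combination (norm := module) ZModModule.add_self (ℓ i)

variable {ρ ℓ} in
theorem edgeColor_square_injective (hρ : ∀ (t : ZMod 2) (z : C), ρ z = t • z → z = 0)
    (hℓ : Injective ℓ) (x : ι → ZMod 2) {i j : ι} (hij : i ≠ j) :
    Injective ![edgeColor ρ ℓ x i, edgeColor ρ ℓ (x + Pi.single i 1) j,
      edgeColor ρ ℓ (x + Pi.single j 1) i, edgeColor ρ ℓ x j] := by
  have hz : ℓ i - ℓ j ≠ 0 := sub_ne_zero.2 (hℓ.ne hij)
  have hρz : ∀ t : ZMod 2, ρ (ℓ i) - ρ (ℓ j) ≠ t • (ℓ i - ℓ j) := fun t h =>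
    hz (hρ t _ ((map_sub ρ _ _).trans h))
  simp only [edgeColor, labelSum_add_single, sum_add_single]
  set p := ∑ k, x k
  set s := labelSum ℓ x
  have h01 : ρ (ℓ i) + p • ℓ i + s ≠ ρ (ℓ j) + (p + 1) • ℓ j + (s + ℓ i) := fun h =>
    hρz (p + 1) (by linear_combination (norm := (match_scalars; all_goals grind)) h)
  have h02 : ρ (ℓ i) + p • ℓ i + s ≠ ρ (ℓ i) + (p + 1) • ℓ i + (s + ℓ j) := fun h =>
    hz (by linear_combination (norm := (match_scalars; all_goals grind)) h)
  have h03 : ρ (ℓ i) + p • ℓ i + s ≠ ρ (ℓ j) + p • ℓ j + s := fun h =>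
    hρz p (by linear_combination (norm := (match_scalars; all_goals grind)) h)
  have h12 : ρ (ℓ j) + (p + 1) • ℓ j + (s + ℓ i) ≠ ρ (ℓ i) + (p + 1) • ℓ i + (s + ℓ j) :=
    fun h => hρz p (by linear_combination (norm := (match_scalars; all_goals grind)) h)
  have h13 : ρ (ℓ j) + (p + 1) • ℓ j + (s + ℓ i) ≠ ρ (ℓ j) + p • ℓ j + s := fun h =>
    hz (by linear_combination (norm := (match_scalars; all_goals grind)) h)
  have h23 : ρ (ℓ i) + (p + 1) • ℓ i + (s + ℓ j) ≠ ρ (ℓ j) + p • ℓ j + s := fun h =>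
    hρz (p + 1) (by linear_combination (norm := (match_scalars; all_goals grind)) h)
  intro a b hab
  fin_cases a <;> fin_cases b <;>
    simp only [Fin.zero_eta, Fin.mk_one, Fin.reduceFinMk, Matrix.cons_val] at hab <;>
    first | rfl | exact absurd hab ‹_› | exact absurd hab.symm ‹_›

def colorClass (γ : C) : Set (Sym2 (ι → ZMod 2)) :=
  {e | ∃ x i, e = s(x, x + Pi.single i 1) ∧ edgeColor ρ ℓ x i = γ}

theorem mk_mem_colorClass (x : ι → ZMod 2) (i : ι) :
    s(x, x + Pi.single i 1) ∈ colorClass ρ ℓ (edgeColor ρ ℓ x i) :=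
  ⟨x, i, rfl, rfl⟩

variable {ρ ℓ}

theorem mem_colorClass_and_mem_iff {γ : C} {e : Sym2 (ι → ZMod 2)} {v : ι → ZMod 2} :
    e ∈ colorClass ρ ℓ γ ∧ v ∈ e ↔
      ∃ i, e = s(v, v + Pi.single i 1) ∧ edgeColor ρ ℓ v i = γ := by
  refine ⟨?_, fun ⟨i, he, hi⟩ =>
    ⟨he ▸ hi ▸ mk_mem_colorClass ρ ℓ v i, he ▸ Sym2.mem_mk_left _ _⟩⟩
  rintro ⟨⟨x, i, rfl, rfl⟩, hv⟩
  rcases Sym2.mem_iff.1 hv with rfl | rfl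
  · exact ⟨i, rfl, rfl⟩
  · refine ⟨i, ?_, edgeColor_add_single ρ ℓ x i⟩
    rw [add_assoc, ZModModule.add_self, add_zero, Sym2.eq_swap]

theorem eq_of_mem_colorClass {γ γ' : C} {e : Sym2 (ι → ZMod 2)} (h : e ∈ colorClass ρ ℓ γ)
    (h' : e ∈ colorClass ρ ℓ γ') : γ = γ' := by
  obtain ⟨x, i, rfl, rfl⟩ := h
  obtain ⟨i', he, rfl⟩ := mem_colorClass_and_mem_iff.1 ⟨h', Sym2.mem_mk_left _ _⟩
  rw [(Pi.single_eq_single_iff one_ne_zero).1 (add_left_cancel (Sym2.congr_right.1 he))]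

end Colouring

section Q4

variable {C : Type*} [AddCommGroup C] [Module (ZMod 2) C] {ρ : C →ₗ[ZMod 2] C} {ℓ : Fin 4 → C}

theorem Q4_adj_iff {x y : Fin 4 → ZMod 2} : Q4.Adj x y ↔ ∃ i, y = x + Pi.single i 1 :=
  hammingDist_eq_one_iff_exists_add_single

theorem adj_and_mk_mem_colorClass_of_eq {x y : Fin 4 → ZMod 2} {i : Fin 4}
    (hy : y = x + Pi.single i 1) : Q4.Adj x y ∧ s(x, y) ∈ colorClass ρ ℓ (edgeColor ρ ℓ x i) := by
  subst hy
  exact ⟨Q4_adj_iff.2 ⟨i, rfl⟩, mk_mem_colorClass ρ ℓ x i⟩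

theorem isPM_colorClass (hρ : ∀ (t : ZMod 2) (z : C), ρ z = t • z → z = 0)
    (hℓ : Bijective ℓ) (γ : C) : IsPM Q4 (colorClass ρ ℓ γ) := by
  refine ⟨fun _ ⟨x, i, he, _⟩ => he ▸ Q4_adj_iff.2 ⟨i, rfl⟩, fun v => ?_⟩
  have := Finite.of_surjective ℓ hℓ.2
  have hc : Bijective (edgeColor ρ ℓ v) :=
    (edgeColor_injective hρ hℓ.1 v).bijective_of_nat_card_le
      (Nat.card_congr (Equiv.ofBijective ℓ hℓ)).ge
  obtain ⟨i, hi⟩ := hc.2 γ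
  refine ⟨s(v, v + Pi.single i 1), mem_colorClass_and_mem_iff.2 ⟨i, rfl, hi⟩, fun e he => ?_⟩
  obtain ⟨i', rfl, hi'⟩ := mem_colorClass_and_mem_iff.1 he
  rw [hc.1 (hi'.trans hi.symm)]

theorem isOneFactorization_colorClass (hρ : ∀ (t : ZMod 2) (z : C), ρ z = t • z → z = 0)
    (hℓ : Bijective ℓ) : IsOneFactorization Q4 (colorClass ρ ℓ ∘ ℓ) := by
  refine ⟨fun j => isPM_colorClass hρ hℓ (ℓ j), Sym2.ind fun x y he => ?_⟩
  obtain ⟨i, rfl⟩ := Q4_adj_iff.1 (Q4.mem_edgeSet.1 he)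
  obtain ⟨j, hj⟩ := hℓ.2 (edgeColor ρ ℓ x i)
  have hmem : s(x, x + Pi.single i 1) ∈ colorClass ρ ℓ (ℓ j) := hj ▸ mk_mem_colorClass ρ ℓ x i
  exact ⟨j, hmem, fun j' hj' => hℓ.1 (eq_of_mem_colorClass hj' hmem)⟩

theorem exists_eq_add_single_of_isC4 {a b c d : Fin 4 → ZMod 2} (h : IsC4 Q4 a b c d) :
    ∃ i j, i ≠ j ∧ b = a + Pi.single i 1 ∧ c = a + Pi.single i 1 + Pi.single j 1 ∧
      d = a + Pi.single j 1 := by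
  obtain ⟨-, hac, -, -, hbd, -, hab, hbc, hcd, hda⟩ := h
  obtain ⟨i, rfl⟩ := Q4_adj_iff.1 hab
  obtain ⟨j, rfl⟩ := Q4_adj_iff.1 hbc
  obtain ⟨k, rfl⟩ := Q4_adj_iff.1 hcd
  obtain ⟨l, hl⟩ := Q4_adj_iff.1 hda
  have hij : i ≠ j := by
    rintro rfl
    exact hac (by rw [add_assoc, ZModModule.add_self, add_zero])
  have hjk : j ≠ k := by
    rintro rfl
    exact hbd (by rw [add_assoc _ (Pi.single j 1), ZModModule.add_self, add_zero])
  obtain ⟨hk, hl⟩ := eq_and_eq_of_single_add_single_add_single_add_single_eq_zero hij hjk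
    (by simpa [add_assoc] using hl.symm)
  subst k l
  refine ⟨i, j, hij, rfl, rfl, ?_⟩
  rw [add_right_comm _ (Pi.single j 1), add_assoc a, ZModModule.add_self, add_zero]

theorem exists_bijective_of_isC4 (hρ : ∀ (t : ZMod 2) (z : C), ρ z = t • z → z = 0)
    (hℓ : Bijective ℓ) {a b c d : Fin 4 → ZMod 2} (h : IsC4 Q4 a b c d) :
    ∃ g : Fin 4 → Fin 4, Bijective g ∧
      s(a, b) ∈ colorClass ρ ℓ (ℓ (g 0)) ∧ s(b, c) ∈ colorClass ρ ℓ (ℓ (g 1)) ∧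
      s(c, d) ∈ colorClass ρ ℓ (ℓ (g 2)) ∧ s(d, a) ∈ colorClass ρ ℓ (ℓ (g 3)) := by
  obtain ⟨i, j, hij, rfl, rfl, rfl⟩ := exists_eq_add_single_of_isC4 h
  set ℓ' := Equiv.ofBijective ℓ hℓ
  have hℓ' : ∀ γ, ℓ (ℓ'.symm γ) = γ := ℓ'.apply_symm_apply
  refine ⟨ℓ'.symm ∘ ![edgeColor ρ ℓ a i, edgeColor ρ ℓ (a + Pi.single i 1) j,
    edgeColor ρ ℓ (a + Pi.single j 1) i, edgeColor ρ ℓ a j], Finite.injective_iff_bijective.1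
    (ℓ'.symm.injective.comp (edgeColor_square_injective hρ hℓ.1 a hij)), ?_, ?_, ?_, ?_⟩
  all_goals simp only [comp_apply, hℓ', Fin.isValue, Matrix.cons_val]
  · exact mk_mem_colorClass ρ ℓ a i
  · exact mk_mem_colorClass ρ ℓ _ j
  · rw [Sym2.eq_swap, add_right_comm]
    exact mk_mem_colorClass ρ ℓ _ i
  · rw [Sym2.eq_swap]
    exact mk_mem_colorClass ρ ℓ a j

end Q4

section F4

/-- `ZMod 2 × ZMod 2` is `𝔽₄` in the basis `(1, ω)`, `ω² = ω + 1`: `mulω` is multiplication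
by `ω`, and `label` lists `0, 1, ω, ω + 1`. -/
def mulω : (ZMod 2 × ZMod 2) →ₗ[ZMod 2] ZMod 2 × ZMod 2 :=
  (LinearMap.snd _ _ _).prod (LinearMap.fst _ _ _ + LinearMap.snd _ _ _)

def label : Fin 4 → ZMod 2 × ZMod 2 := ![(0, 0), (1, 0), (0, 1), (1, 1)]

theorem eq_zero_of_mulω_eq_smul (t : ZMod 2) (z : ZMod 2 × ZMod 2) (h : mulω z = t • z) :
    z = 0 := by
  revert t z
  decide

theorem label_bijective : Bijective label := by decide

def cycleV : ZMod 8 → Fin 4 → ZMod 2 :=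
  ![![1, 0, 0, 0], ![0, 0, 0, 0], ![0, 0, 0, 1], ![0, 0, 1, 1],
    ![0, 1, 1, 1], ![1, 1, 1, 1], ![1, 1, 1, 0], ![1, 1, 0, 0]]

def cycleW : ZMod 8 → Fin 4 → ZMod 2 :=
  ![![0, 1, 0, 0], ![0, 1, 1, 0], ![0, 0, 1, 0], ![1, 0, 1, 0],
    ![1, 0, 1, 1], ![1, 0, 0, 1], ![1, 1, 0, 1], ![0, 1, 0, 1]]

theorem cycleV_succ (k : ZMod 8) :
    cycleV (k + 1) = cycleV k + Pi.single (-cyc8 k) 1 ∧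
      edgeColor mulω label (cycleV k) (-cyc8 k) = label (cyc8 k) := by
  revert k
  decide

theorem cycleW_succ (k : ZMod 8) :
    cycleW (k + 1) = cycleW k + Pi.single (2 - cyc8 k) 1 ∧
      edgeColor mulω label (cycleW k) (2 - cyc8 k) = label (cyc8 k) := by
  revert k
  decide

theorem bijective_sumElim_cycleV_cycleW : Bijective (Sum.elim cycleV cycleW) := by
  decide

end F4

/-- there is a 1-factorization `(F 0, F 1, F 2, F 3)` of `Q4`, rainbow on
every 4-cycle, together with a 2-factor of `Q4` consisting of two vertex-disjoint
8-cycles `v` and `w` (indexed cyclically by `ZMod 8`, together visiting the 16 vertices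
bijectively, all edges being edges of `Q4`), such that the successive edges of each
8-cycle lie in the 1-factors in the cyclic order `(1,2,3,4,1,2,3,4)`. -/
theorem stmt4 : ∃ F : Fin 4 → Set (Sym2 (Fin 4 → ZMod 2)),
    IsOneFactorization Q4 F ∧
    (∀ a b c d : Fin 4 → ZMod 2, IsC4 Q4 a b c d →
      ∃ g : Fin 4 → Fin 4, Function.Bijective g ∧
        s(a, b) ∈ F (g 0) ∧ s(b, c) ∈ F (g 1) ∧ s(c, d) ∈ F (g 2) ∧ s(d, a) ∈ F (g 3)) ∧
    ∃ v w : ZMod 8 → (Fin 4 → ZMod 2),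
      Function.Bijective (Sum.elim v w : ZMod 8 ⊕ ZMod 8 → (Fin 4 → ZMod 2)) ∧
      (∀ k : ZMod 8, Q4.Adj (v k) (v (k + 1))) ∧
      (∀ k : ZMod 8, Q4.Adj (w k) (w (k + 1))) ∧
      (∀ k : ZMod 8, s(v k, v (k + 1)) ∈ F (cyc8 k)) ∧
      (∀ k : ZMod 8, s(w k, w (k + 1)) ∈ F (cyc8 k)) := by
  have hv k := (cycleV_succ k).2 ▸ adj_and_mk_mem_colorClass_of_eq (ρ := mulω) (cycleV_succ k).1
  have hw k := (cycleW_succ k).2 ▸ adj_and_mk_mem_colorClass_of_eq (ρ := mulω) (cycleW_succ k).1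
  exact ⟨colorClass mulω label ∘ label,
    isOneFactorization_colorClass eq_zero_of_mulω_eq_smul label_bijective,
    fun _ _ _ _ h => exists_bijective_of_isC4 eq_zero_of_mulω_eq_smul label_bijective h,
    cycleV, cycleW, bijective_sumElim_cycleV_cycleW,
    fun k => (hv k).1, fun k => (hw k).1, fun k => (hv k).2, fun k => (hw k).2⟩
end

section
/- The automorphism group of the 4-cube graph Q₄ has exactly 384 elements, and it is isomorphic to the semidirect product of Z₂⁴ (the translations x ↦ x + a on the vertex set) by the symmetric group Sym₄ acting by permuting the four coordinates. -/
/-- The automorphism group of `Q4`, as the subgroup of permutations of the vertex set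
preserving adjacency. -/
def autQ4 : Subgroup (Equiv.Perm (Fin 4 → ZMod 2)) where
  carrier := {σ | ∀ x y, Q4.Adj (σ x) (σ y) ↔ Q4.Adj x y}
  one_mem' := by intro x y; simp
  mul_mem' := by
    intro a b ha hb x y
    simpa using (ha (b x) (b y)).trans (hb x y)
  inv_mem' := by
    intro a ha x y
    simpa using (ha (a⁻¹ x) (a⁻¹ y)).symm

/-- The action of `Sym₄` on `Z₂⁴ = Fin 4 → ZMod 2` (written multiplicatively)
by permuting the four coordinates. -/
def coordHom : Equiv.Perm (Fin 4) →* MulAut (Multiplicative (Fin 4 → ZMod 2)) where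
  toFun σ :=
    { toFun := fun x => Multiplicative.ofAdd fun i => Multiplicative.toAdd x (σ⁻¹ i)
      invFun := fun x => Multiplicative.ofAdd fun i => Multiplicative.toAdd x (σ i)
      left_inv := by intro x; funext i; simp
      right_inv := by intro x; funext i; simp
      map_mul' := by intro x y; rfl }
  map_one' := by
    apply MulEquiv.ext; intro x; rfl
  map_mul' := by
    intro σ τ
    apply MulEquiv.ext; intro x
    funext i
    simp [mul_inv_rev]

/-!
Translations `x ↦ a + x` and coordinate permutations are automorphisms of the cube, and together
they give all of them. Composing an automorphism `f` with the translation by `f 0` makes it fix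
`0`; it then permutes the neighbours `eᵢ` of `0`, and undoing that permutation leaves an
automorphism fixing `0` and every `eᵢ`. Such an automorphism is the identity, by induction on the
Hamming weight: if `x i ≠ 0` and `x j ≠ 0` with `i ≠ j`, the only common neighbours of `x + eᵢ` and
`x + eⱼ` are `x` and `x + eᵢ + eⱼ`, and all of these but `x` have smaller weight. A translation
composed with a permutation is the identity only when both are trivial, so the automorphism group
is the semidirect product, of order `2⁴ · 4! = 384`.
-/

open Finset

def hypercube (ι : Type*) [Fintype ι] : SimpleGraph (ι → ZMod 2) where
  Adj x y := hammingDist x y = 1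
  symm := ⟨fun x y h => by rwa [hammingDist_comm]⟩
  loopless := ⟨fun x h => by simp at h⟩

theorem Pi.single_left_injective {ι β : Type*} [DecidableEq ι] [Zero β] {b : β} (hb : b ≠ 0) :
    Function.Injective fun i : ι => Pi.single i b := fun i j hij => by
  by_contra hne
  exact hb (by simpa [hne] using congrFun hij i)

theorem hammingDist_comp_equiv {κ ι β : Type*} [Fintype κ] [Fintype ι] [DecidableEq β]
    (e : κ ≃ ι) (x y : ι → β) : hammingDist (x ∘ e) (y ∘ e) = hammingDist x y :=
  card_equiv e (by simp)

section

variable {ι : Type*} [Fintype ι] [DecidableEq ι]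

theorem hammingNorm_eq_one_iff {z : ι → ZMod 2} : hammingNorm z = 1 ↔ ∃ i, z = Pi.single i 1 := by
  refine ⟨fun h => ?_, ?_⟩
  · obtain ⟨i, hi⟩ := card_eq_one.1 h
    have hz : ∀ j, z j ≠ 0 ↔ j = i := by simpa [Finset.ext_iff] using hi
    refine ⟨i, funext fun j => ?_⟩
    rw [Pi.single_apply]
    split_ifs with hji
    · exact Fin.eq_one_of_ne_zero _ ((hz j).2 hji)
    · exact not_not.1 (mt (hz j).1 hji)
  · rintro ⟨i, rfl⟩
    simp [hammingNorm, Pi.single_apply, filter_eq']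

theorem hammingNorm_add_single_lt {x : ι → ZMod 2} {i : ι} (hi : x i ≠ 0) :
    hammingNorm (x + Pi.single i 1) < hammingNorm x := by
  have hxi : x i = 1 := Fin.eq_one_of_ne_zero _ hi
  have : ({j | (x + Pi.single i 1 : ι → ZMod 2) j ≠ 0} : Finset ι) =
      ({j | x j ≠ 0} : Finset ι).erase i := by
    ext j
    by_cases hj : j = i
    · simp [hj, hxi, ZModModule.add_self]
    · simp [hj]
  unfold hammingNorm
  rw [this]
  exact card_erase_lt_of_mem (by simpa using hi)

end

namespace hypercube

variable {ι : Type*} [Fintype ι]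

theorem adj_iff_hammingNorm {x y : ι → ZMod 2} :
    (hypercube ι).Adj x y ↔ hammingNorm (x + y) = 1 := by
  change hammingDist x y = 1 ↔ _
  rw [hammingDist_eq_hammingNorm, ZModModule.neg_eq_self]

def translate (a : ι → ZMod 2) : hypercube ι ≃g hypercube ι where
  toEquiv := Equiv.addLeft a
  map_rel_iff' {x y} := by
    change (hypercube ι).Adj (a + x) (a + y) ↔ (hypercube ι).Adj x y
    rw [adj_iff_hammingNorm, adj_iff_hammingNorm, add_add_add_comm, ZModModule.add_self, zero_add]

def permCoords (σ : Equiv.Perm ι) : hypercube ι ≃g hypercube ι where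
  toEquiv := σ.arrowCongr (Equiv.refl _)
  map_rel_iff' {x y} := by
    change hammingDist (x ∘ σ.symm) (y ∘ σ.symm) = 1 ↔ hammingDist x y = 1
    rw [hammingDist_comp_equiv]

theorem translate_apply (a x : ι → ZMod 2) : translate a x = a + x := rfl

theorem permCoords_apply (σ : Equiv.Perm ι) (x : ι → ZMod 2) :
    permCoords σ x = fun i => x (σ⁻¹ i) := rfl

theorem translate_mul_self (a : ι → ZMod 2) : translate a * translate a = 1 :=
  RelIso.ext fun x => by
    rw [RelIso.mul_apply, translate_apply, translate_apply, ← add_assoc, ZModModule.add_self,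
      zero_add, RelIso.one_apply]

def coordAction (ι : Type*) : Equiv.Perm ι →* MulAut (Multiplicative (ι → ZMod 2)) where
  toFun σ :=
    { toFun := fun x => Multiplicative.ofAdd fun i => Multiplicative.toAdd x (σ⁻¹ i)
      invFun := fun x => Multiplicative.ofAdd fun i => Multiplicative.toAdd x (σ i)
      left_inv x := by ext i; simp
      right_inv x := by ext i; simp
      map_mul' _ _ := rfl }
  map_one' := rfl
  map_mul' _ _ := rfl

def translateHom : Multiplicative (ι → ZMod 2) →* (hypercube ι ≃g hypercube ι) where
  toFun a := translate a.toAdd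
  map_one' := RelIso.ext zero_add
  map_mul' a b := RelIso.ext (add_assoc a.toAdd b.toAdd)

def permCoordsHom : Equiv.Perm ι →* (hypercube ι ≃g hypercube ι) where
  toFun := permCoords
  map_one' := rfl
  map_mul' _ _ := rfl

theorem translateHom_comp_coordAction (σ : Equiv.Perm ι) :
    translateHom.comp (coordAction ι σ).toMonoidHom =
      (MulAut.conj (permCoordsHom σ)).toMonoidHom.comp translateHom := by
  ext a x i
  obtain ⟨y, rfl⟩ := (permCoords σ).surjective x
  change _ = permCoords σ (a + (permCoords σ)⁻¹ (permCoords σ y)) i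
  rw [RelIso.inv_apply_self]
  rfl

def semidirectToAut :
    Multiplicative (ι → ZMod 2) ⋊[coordAction ι] Equiv.Perm ι →* (hypercube ι ≃g hypercube ι) :=
  SemidirectProduct.lift translateHom permCoordsHom translateHom_comp_coordAction

theorem semidirectToAut_mk (a : Multiplicative (ι → ZMod 2)) (σ : Equiv.Perm ι) :
    semidirectToAut ⟨a, σ⟩ = translate a.toAdd * permCoords σ := rfl

variable [DecidableEq ι]

theorem adj_iff {x y : ι → ZMod 2} : (hypercube ι).Adj x y ↔ ∃ i, y = x + Pi.single i 1 := by
  rw [adj_iff_hammingNorm, hammingNorm_eq_one_iff]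
  refine exists_congr fun i => ⟨fun h => ?_, fun h => ?_⟩
  · rw [← h, ← add_assoc, ZModModule.add_self, zero_add]
  · rw [h, ← add_assoc, ZModModule.add_self, zero_add]

theorem adj_add_single (x : ι → ZMod 2) (i : ι) : (hypercube ι).Adj x (x + Pi.single i 1) :=
  adj_iff.2 ⟨i, rfl⟩

theorem permCoords_single (σ : Equiv.Perm ι) (i : ι) :
    permCoords σ (Pi.single i 1) = Pi.single (σ i) 1 := by
  ext j
  simp [permCoords_apply, Pi.single_apply, Equiv.symm_apply_eq]

theorem eq_or_eq_of_adj_add_single_of_adj_add_single {x w : ι → ZMod 2} {i j : ι} (hij : i ≠ j)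
    (hi : (hypercube ι).Adj (x + Pi.single i 1) w) (hj : (hypercube ι).Adj (x + Pi.single j 1) w) :
    w = x ∨ w = x + Pi.single i 1 + Pi.single j 1 := by
  obtain ⟨k, rfl⟩ := adj_iff.1 hi
  obtain ⟨l, hl⟩ := adj_iff.1 hj
  by_cases hki : k = i
  · left
    rw [hki, add_assoc, ZModModule.add_self, add_zero]
  · right
    have hli : l = i := by
      have := congrFun hl i
      by_contra hli
      simp [hki, hij, Ne.symm hli] at this
    rw [hl, hli, add_right_comm]

theorem eq_self_of_map_zero_of_map_single (f : hypercube ι ≃g hypercube ι) (h0 : f 0 = 0)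
    (h1 : ∀ i, f (Pi.single i 1) = Pi.single i 1) (x : ι → ZMod 2) : f x = x := by
  induction hn : hammingNorm x using Nat.strong_induction_on generalizing x with
  | _ n ih =>
  rcases lt_trichotomy n 1 with hlt | rfl | hgt
  · obtain rfl : x = 0 := hammingNorm_lt_one.1 (by omega)
    exact h0
  · obtain ⟨i, rfl⟩ := hammingNorm_eq_one_iff.1 hn
    exact h1 i
  · obtain ⟨i, hi, j, hj, hij⟩ := one_lt_card.1 (hn.symm ▸ hgt)
    simp only [mem_filter, mem_univ, true_and] at hi hj
    have hxj_i : (x + Pi.single j 1 : ι → ZMod 2) i ≠ 0 := by simpa [hij] using hi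
    have hlt_i := hammingNorm_add_single_lt hi
    have hlt_j := hammingNorm_add_single_lt hj
    have hlt_ij := hammingNorm_add_single_lt hxj_i
    rw [add_right_comm] at hlt_ij
    have hfix : ∀ y, hammingNorm y < hammingNorm x → f y = y := fun y hy => ih _ (hn ▸ hy) y rfl
    have hadj : ∀ k, hammingNorm (x + Pi.single k 1) < hammingNorm x →
        (hypercube ι).Adj (x + Pi.single k 1) (f x) := fun k hk => by
      simpa [hfix _ hk] using (f.map_adj_iff.2 (adj_add_single x k)).symm
    refine (eq_or_eq_of_adj_add_single_of_adj_add_single hij (hadj i hlt_i) (hadj j hlt_j))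
      |>.resolve_right fun hfx => ?_
    have hx : x = x + Pi.single i 1 + Pi.single j 1 :=
      f.injective (hfx.trans (hfix _ (hlt_ij.trans hlt_j)).symm)
    simpa [hij] using congrFun hx i

theorem exists_perm_map_single (f : hypercube ι ≃g hypercube ι) (h0 : f 0 = 0) :
    ∃ σ : Equiv.Perm ι, ∀ i, f (Pi.single i 1) = Pi.single (σ i) 1 := by
  have hadj (i : ι) : ∃ k, f (Pi.single i 1) = Pi.single k 1 := by
    simpa [h0] using adj_iff.1 (f.map_adj_iff.2 (adj_add_single 0 i))
  choose t ht using hadj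
  have ht_inj : Function.Injective t := fun i j hij =>
    Pi.single_left_injective one_ne_zero (f.injective ((ht i).trans (hij ▸ ht j).symm))
  exact ⟨Equiv.ofBijective t (Finite.injective_iff_bijective.1 ht_inj), ht⟩

theorem exists_eq_translate_mul_permCoords (f : hypercube ι ≃g hypercube ι) :
    ∃ σ : Equiv.Perm ι, f = translate (f 0) * permCoords σ := by
  set g := translate (f 0) * f
  have hg0 : g 0 = 0 := ZModModule.add_self (f 0)
  obtain ⟨σ, hσ⟩ := exists_perm_map_single g hg0
  have hfix := eq_self_of_map_zero_of_map_single ((permCoords σ)⁻¹ * g)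
    (by rw [RelIso.mul_apply, hg0]; exact RelIso.inv_apply_self _ 0)
    (fun i => by rw [RelIso.mul_apply, hσ, ← permCoords_single, RelIso.inv_apply_self])
  refine ⟨σ, RelIso.ext fun x => ?_⟩
  have hgx : g x = permCoords σ x := by
    conv_rhs => rw [← hfix x, RelIso.mul_apply, RelIso.apply_inv_self]
  rw [RelIso.mul_apply, ← hgx, ← RelIso.mul_apply, ← mul_assoc, translate_mul_self, one_mul]

theorem semidirectToAut_injective : Function.Injective (semidirectToAut (ι := ι)) := by
  rw [injective_iff_map_eq_one]
  rintro ⟨a, σ⟩ h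
  rw [semidirectToAut_mk] at h
  have ha : a.toAdd + 0 = 0 := DFunLike.congr_fun h 0
  rw [add_zero] at ha
  have hσ : σ = 1 := Equiv.ext fun i => Pi.single_left_injective one_ne_zero <| by
    have hi := DFunLike.congr_fun h (Pi.single i 1)
    rwa [RelIso.mul_apply, translate_apply, ha, zero_add, permCoords_single] at hi
  ext <;> simp [ha, hσ]

theorem semidirectToAut_surjective : Function.Surjective (semidirectToAut (ι := ι)) := fun f =>
  let ⟨σ, hσ⟩ := exists_eq_translate_mul_permCoords f
  ⟨⟨.ofAdd (f 0), σ⟩, hσ.symm⟩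

noncomputable def autMulEquiv :
    Multiplicative (ι → ZMod 2) ⋊[coordAction ι] Equiv.Perm ι ≃* (hypercube ι ≃g hypercube ι) :=
  MulEquiv.ofBijective semidirectToAut ⟨semidirectToAut_injective, semidirectToAut_surjective⟩

end hypercube

-- `Q4` is `hypercube (Fin 4)` by definition: both count the coordinates where `x` and `y` differ.
def autQ4MulEquiv : autQ4 ≃* (hypercube (Fin 4) ≃g hypercube (Fin 4)) where
  toFun g := ⟨g.1, g.2 _ _⟩
  invFun f := ⟨f.toEquiv, fun _ _ => f.map_adj_iff⟩
  left_inv _ := rfl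
  right_inv _ := rfl
  map_mul' _ _ := rfl

/-- the automorphism group of `Q4` has exactly 384 elements and is
isomorphic to the semidirect product of `Z₂⁴` (the translations) by `Sym₄`
(permuting the four coordinates). -/
theorem stmt8 :
    Nat.card autQ4 = 384 ∧
    Nonempty (autQ4 ≃* SemidirectProduct (Multiplicative (Fin 4 → ZMod 2))
      (Equiv.Perm (Fin 4)) coordHom) := by
  -- `coordHom` is `hypercube.coordAction (Fin 4)` by definition.
  let e : autQ4 ≃* Multiplicative (Fin 4 → ZMod 2) ⋊[coordHom] Equiv.Perm (Fin 4) :=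
    autQ4MulEquiv.trans hypercube.autMulEquiv.symm
  refine ⟨?_, ⟨e⟩⟩
  rw [Nat.card_congr e.toEquiv, SemidirectProduct.card]
  simp [Nat.card_eq_fintype_card, Fintype.card_perm, Nat.factorial]
end
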